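/- Let P = P_10 − z and let w_1 be one of its three 2-valent vertices. Then the set of vertices of P at maximum distance from w_1 is exactly the set of the other two 2-valent vertices. -/

import Mathlib

open SimpleGraph

/-- Degree of a vertex, via the cardinality of its neighbor set. -/
noncomputable def hdeg {V : Type*} (G : SimpleGraph V) (v : V) : ℕ :=
  {w | G.Adj v w}.ncard

/-- A cubic graph: every vertex has degree 3. -/
def IsCubic {V : Type*} (G : SimpleGraph V) : Prop := ∀ v, hdeg G v = 3

/-- A 2-connected graph: at least 3 vertices and deleting any vertex leaves it connected. -/
def TwoConnected {V : Type*} (G : SimpleGraph V) : Prop :=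
  3 ≤ Nat.card V ∧ ∀ v : V, (G.induce {v}ᶜ).Connected

/-- A 3-connected graph: at least 4 vertices and deleting any two vertices leaves it connected. -/
def ThreeConnected {V : Type*} (G : SimpleGraph V) : Prop :=
  4 ≤ Nat.card V ∧ ∀ v w : V, v ≠ w → (G.induce ({v, w} : Set V)ᶜ).Connected

/-- Edge list of the Petersen graph on `Fin 10` (vertex 9 has neighbors 4, 6, 7). -/
def petEdges : List (Fin 10 × Fin 10) :=
  [(0,1),(1,2),(2,3),(3,4),(4,0),(0,5),(1,6),(2,7),(3,8),(4,9),(5,7),(7,9),(9,6),(6,8),(8,5)]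

/-- The Petersen graph `P₁₀`. -/
def Pet : SimpleGraph (Fin 10) := SimpleGraph.fromRel (fun a b => (a, b) ∈ petEdges)

/-- Edge list of `P = P₁₀ - z` on `Fin 9` (where `z` was vertex 9);
its three 2-valent vertices are 4, 6, 7. -/
def pEdges : List (Fin 9 × Fin 9) :=
  [(0,1),(1,2),(2,3),(3,4),(4,0),(0,5),(1,6),(2,7),(3,8),(5,7),(6,8),(8,5)]

/-- The graph `P = P₁₀ - z`, the Petersen graph minus one vertex. -/
def Pgr : SimpleGraph (Fin 9) := SimpleGraph.fromRel (fun a b => (a, b) ∈ pEdges)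

/-- The three 2-valent vertices of `P` (as targets of the port assignment). -/
def portIdx : ℕ → Fin 9
  | 0 => 4
  | 1 => 6
  | _ => 7

/-- Port assignment: to which 2-valent vertex of the copy of `P` replacing `u` the
neighbor `v` of `u` gets attached (neighbors are ordered by the injective encoding `enc`). -/
noncomputable def port {V : Type*} (G : SimpleGraph V) (enc : V → ℕ) (u v : V) : Fin 9 :=
  portIdx (Nat.card {w : V | G.Adj u w ∧ enc w < enc v})

/-- Simultaneous `P`-inflation at every vertex of `G`. -/
noncomputable def inflate {V : Type*} (G : SimpleGraph V) (enc : V → ℕ) :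
    SimpleGraph (V × Fin 9) where
  Adj a b :=
    (a.1 = b.1 ∧ Pgr.Adj a.2 b.2) ∨
    (G.Adj a.1 b.1 ∧ a.2 = port G enc a.1 b.1 ∧ b.2 = port G enc b.1 a.1)
  symm := ⟨by
    rintro a b (⟨h1, h2⟩ | ⟨h1, h2, h3⟩)
    · exact Or.inl ⟨h1.symm, h2.symm⟩
    · exact Or.inr ⟨h1.symm, h3, h2⟩⟩
  loopless := ⟨by
    rintro a (⟨-, h⟩ | ⟨h, -, -⟩)
    · exact Pgr.ne_of_adj h rfl
    · exact G.ne_of_adj h rfl⟩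

/-- A graph bundled with an injective-style encoding of its vertices into `ℕ`. -/
structure GE where
  V : Type
  G : SimpleGraph V
  enc : V → ℕ

/-- One round of simultaneous `P`-inflation. -/
noncomputable def step (A : GE) : GE :=
  ⟨A.V × Fin 9, inflate A.G A.enc, fun p => Nat.pair (A.enc p.1) p.2.val⟩

/-- The iterated Petersen graph `P₁₀ᵏ`. -/
noncomputable def ItP10 : ℕ → GE
  | 0 => ⟨Fin 10, Pet, Fin.val⟩
  | k + 1 => step (ItP10 k)

/-- The iterated graph `Pᵏ` (starting from `P = P₁₀ - z`). -/
noncomputable def ItP : ℕ → GE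
  | 0 => ⟨Fin 9, Pgr, Fin.val⟩
  | k + 1 => step (ItP k)

/-- The canonical copy of `P^{k-1}` in `P₁₀ᵏ` containing a given vertex,
recorded by the corresponding vertex of `P₁₀`. -/
noncomputable def baseOf : (k : ℕ) → (ItP10 k).V → Fin 10
  | 0 => id
  | k + 1 => fun p => baseOf k p.1

/-- The parameter `l(G)`: minimum over circuits `C` of the maximum over vertices `v`
of the distance `d(C, v)`. -/
noncomputable def ell {V : Type*} (G : SimpleGraph V) : ℕ :=
  sInf { n | ∃ (v : V) (w : G.Walk v v), w.IsCycle ∧ ∀ u : V, ∃ x ∈ w.support, G.dist x u ≤ n }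

/-- `M` is a matching of `G`: a set of edges of `G`, pairwise not sharing a vertex. -/
def IsMatchingSet {V : Type*} (G : SimpleGraph V) (M : Set (Sym2 V)) : Prop :=
  M ⊆ G.edgeSet ∧ ∀ e ∈ M, ∀ f ∈ M, e ≠ f → ∀ v : V, ¬(v ∈ e ∧ v ∈ f)

/-- Every connected component of `H` has an even number of vertices. -/
def EvenComponents {V : Type*} (H : SimpleGraph V) : Prop :=
  ∀ c : H.ConnectedComponent, Even c.supp.ncard

/-- An `f`-matching: a matching `M` such that every component of `G - M` is
2-connected and has an even number of vertices. -/
def IsFMatching {V : Type*} (G : SimpleGraph V) (M : Set (Sym2 V)) : Prop :=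
  IsMatchingSet G M ∧
    ∀ c : (G.deleteEdges M).ConnectedComponent,
      TwoConnected ((G.deleteEdges M).induce c.supp) ∧ Even c.supp.ncard

/-- A minimal edge cut of `G`: deleting it disconnects `G`, but deleting any
proper subset does not. -/
def IsMinEdgeCut {V : Type*} (G : SimpleGraph V) (E : Set (Sym2 V)) : Prop :=
  E ⊆ G.edgeSet ∧ ¬(G.deleteEdges E).Connected ∧
    ∀ F : Set (Sym2 V), F ⊂ E → (G.deleteEdges F).Connected

/-- `H` is a subdivision of `F`: the vertices of `F` embed into `H` and each edge of `F`
corresponds to a path in `H`, the paths being internally disjoint and covering `H`. -/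
def IsSubdivisionOf {W U : Type*} (H : SimpleGraph W) (F : SimpleGraph U) : Prop :=
  ∃ f : U ↪ W, ∃ p : ∀ u v : U, F.Adj u v → H.Walk (f u) (f v),
    (∀ u v h, (p u v h).IsPath) ∧
    (∀ u v h, ∀ w ∈ (p u v h).support, w ∈ Set.range f → w = f u ∨ w = f v) ∧
    (∀ e : Sym2 W, e ∈ H.edgeSet ↔ ∃ u v h, e ∈ (p u v h).edges) ∧
    (∀ w : W, w ∈ Set.range f ∨ ∃ u v h, w ∈ (p u v h).support) ∧
    (∀ u v h u' v' h', ∀ w : W,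
      w ∈ (p u v h).support → w ∈ (p u' v' h').support →
      w ∈ Set.range f ∨ (u = u' ∧ v = v') ∨ (u = v' ∧ v = u'))

/-- Each component of `F` is an even circuit or a 2-connected cubic graph. -/
def GoodFrameComponents {U : Type*} (F : SimpleGraph U) : Prop :=
  ∀ c : F.ConnectedComponent,
    ((F.induce c.supp).Connected ∧ (∀ v, hdeg (F.induce c.supp) v = 2) ∧ Even c.supp.ncard) ∨
    (TwoConnected (F.induce c.supp) ∧ IsCubic (F.induce c.supp))

/-- `F` is a frame of `G`. -/
def IsFrame {U V : Type*} (F : SimpleGraph U) (G : SimpleGraph V) : Prop :=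
  GoodFrameComponents F ∧
    ∃ H : SimpleGraph V, H ≤ G ∧ IsSubdivisionOf H F ∧ EvenComponents H

/-- A proper 3-edge-coloring of `G`. -/
def ProperEdgeColoring {V : Type*} (G : SimpleGraph V) (f : Sym2 V → Fin 3) : Prop :=
  ∀ u v w : V, G.Adj u v → G.Adj u w → v ≠ w → f s(u, v) ≠ f s(u, w)

/-- The spanning subgraph of edges whose color is different from `c`
(i.e. the union of the other two color classes). -/
def twoClassSub {V : Type*} (G : SimpleGraph V) (f : Sym2 V → Fin 3) (c : Fin 3) :
    SimpleGraph V where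
  Adj u v := G.Adj u v ∧ f s(u, v) ≠ c
  symm := ⟨by
    rintro u v ⟨h1, h2⟩
    exact ⟨h1.symm, by rwa [Sym2.eq_swap]⟩⟩
  loopless := ⟨fun v h => G.ne_of_adj h.1 rfl⟩

/-- A Kotzig graph: a cubic graph with a proper 3-edge-coloring in which any two
color classes form a hamiltonian circuit. -/
def IsKotzig {V : Type*} (G : SimpleGraph V) : Prop :=
  IsCubic G ∧ ∃ f : Sym2 V → Fin 3, ProperEdgeColoring G f ∧
    ∀ c : Fin 3, (twoClassSub G f c).Connected ∧ ∀ v, hdeg (twoClassSub G f c) v = 2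

/-- The family `Fam` is an even subdivision-factor of `G`. -/
def IsEvenSubdivFactor {ι : Type*} (Fam : ι → Σ n : ℕ, SimpleGraph (Fin n))
    {V : Type*} (G : SimpleGraph V) : Prop :=
  ∃ H : SimpleGraph V, H ≤ G ∧ ∀ c : H.ConnectedComponent,
    Even c.supp.ncard ∧ ∃ i, IsSubdivisionOf (H.induce c.supp) (Fam i).2

/-!
In the Petersen graph two nonadjacent vertices have exactly one common neighbour. Deleting `z`
thus destroys the only path of length 2 between two of its former neighbours, which end up at
distance 3, whereas every other vertex stays within distance 2 of `w₁`. In the nine-vertex graph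
these distances are certified by enumerating the walks of length at most 3 out of `w₁`.
-/

namespace SimpleGraph

variable {V : Type*} (G : SimpleGraph V) [G.LocallyFinite]

theorem hdeg_eq_degree (v : V) : hdeg G v = G.degree v := by
  rw [hdeg, ← card_neighborSet_eq_degree, ← Nat.card_eq_fintype_card, Nat.card_coe_set_eq]
  rfl

variable [DecidableEq V]

def closedBallFinset (u : V) : ℕ → Finset V
  | 0 => {u}
  | n + 1 => insert u ((G.neighborFinset u).biUnion fun x => closedBallFinset x n)

variable {G}

theorem mem_closedBallFinset_iff {u v : V} {n : ℕ} :
    v ∈ G.closedBallFinset u n ↔ ∃ p : G.Walk u v, p.length ≤ n := by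
  induction n generalizing u with
  | zero =>
    simp only [closedBallFinset, Finset.mem_singleton, Nat.le_zero, Walk.length_eq_zero_iff]
    exact ⟨fun h => h ▸ ⟨.nil, .nil⟩, fun ⟨p, hp⟩ => hp.eq.symm⟩
  | succ n ih =>
    simp only [closedBallFinset, Finset.mem_insert, Finset.mem_biUnion, mem_neighborFinset, ih]
    constructor
    · rintro (rfl | ⟨x, hx, p, hp⟩)
      · exact ⟨.nil, Nat.zero_le _⟩
      · exact ⟨.cons hx p, by simpa using hp⟩
    · rintro ⟨_ | ⟨hx, p⟩, hp⟩
      · exact .inl rfl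
      · exact .inr ⟨_, hx, p, by simpa using hp⟩

theorem dist_le_iff_mem_closedBallFinset {u v : V} {n : ℕ} (hr : G.Reachable u v) :
    G.dist u v ≤ n ↔ v ∈ G.closedBallFinset u n := by
  rw [mem_closedBallFinset_iff]
  refine ⟨fun h => ?_, fun ⟨p, hp⟩ => (G.dist_le p).trans hp⟩
  obtain ⟨p, hp⟩ := hr.exists_walk_length_eq_dist
  exact ⟨p, hp ▸ h⟩

theorem setOf_forall_dist_le_eq_compl_closedBallFinset {u : V} {n : ℕ}
    (hcover : ∀ v, v ∈ G.closedBallFinset u (n + 1))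
    (hfar : ∃ w, w ∉ G.closedBallFinset u n) :
    {v | ∀ w, G.dist u w ≤ G.dist u v} = {v | v ∉ G.closedBallFinset u n} := by
  have hr (w : V) : G.Reachable u w :=
    (mem_closedBallFinset_iff.1 (hcover w)).elim fun p _ => ⟨p⟩
  have hle (w : V) : G.dist u w ≤ n + 1 := (dist_le_iff_mem_closedBallFinset (hr w)).2 (hcover w)
  simp only [← dist_le_iff_mem_closedBallFinset (hr _), not_le] at hfar ⊢
  obtain ⟨w, hw⟩ := hfar
  ext v
  exact ⟨fun h => hw.trans_le (h w), fun h w' => (hle w').trans h⟩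

end SimpleGraph

instance : DecidableRel Pgr.Adj := fun a b =>
  inferInstanceAs (Decidable (a ≠ b ∧ _))

/-- for a 2-valent vertex `w₁` of `P = P₁₀ - z`, the set of vertices
at maximum distance from `w₁` is exactly the set of the other two 2-valent vertices. -/
theorem stmt_4 (w1 : Fin 9) (h1 : hdeg Pgr w1 = 2) :
    {v : Fin 9 | ∀ u : Fin 9, Pgr.dist w1 u ≤ Pgr.dist w1 v} =
    {w : Fin 9 | hdeg Pgr w = 2 ∧ w ≠ w1} := by
  have hball : ∀ w : Fin 9, Pgr.degree w = 2 →
      (∀ v, v ∈ Pgr.closedBallFinset w 3) ∧ (∃ v, v ∉ Pgr.closedBallFinset w 2) ∧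
        ∀ v, v ∉ Pgr.closedBallFinset w 2 ↔ Pgr.degree v = 2 ∧ v ≠ w := by
    decide
  simp only [hdeg_eq_degree] at h1 ⊢
  obtain ⟨hcover, hfar, hfar_iff⟩ := hball w1 h1
  rw [setOf_forall_dist_le_eq_compl_closedBallFinset hcover hfar]
  exact Set.ext hfar_iff
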